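/- If 5/3 ≤ k < 2 is real, then R_n^(k) = p_n if and only if n = 1. -/

import Mathlib

/-!
For `k ≥ 5/3` we have `x / k ≤ 3x/5`, so `R_1^(k) = 2` amounts to a prime in `(3x/5, x]` for
every `x ≥ 2`. For large `x` this is Chebyshev's method: the combination
`E(x) = log ⌊x⌋! - log ⌊x/2⌋! - log ⌊x/3⌋! - log ⌊x/5⌋! + log ⌊x/30⌋!`
equals `∑_{d ≤ x} Λ(d) w(⌊x/d⌋)` with `w ≤ 1`, so `E(x) ≤ ψ(x)`, while Stirling's formula makes
`E(x)` about `0.92 x`. Hence `θ(x) ≥ ψ(x) - 2√x log x > (6/5) log 2 · x ≥ θ(3x/5)` once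
`x ≥ 2^24`. Below `2^24` a chain of primes, each at most `5/3` times the previous one, does the job.

Conversely, for `n ≥ 2` and `k < 2` the point `x = p_{n+1} - 1 ≥ p_n` has `π(x) = n` but
`π(x/k) ≥ 1`, so `R_n^(k) ≠ p_n`.
-/

/-- Prime counting function extended to the reals: `primePi x = π(⌊x⌋)`. -/
noncomputable def primePi (x : ℝ) : ℕ := Nat.primeCounting ⌊x⌋₊

/-- The `n`-th `k`-Ramanujan prime: the smallest positive integer `m` such that
`π(x) - π(x/k) ≥ n` for all real `x ≥ m`. -/
noncomputable def Ram (k : ℝ) (n : ℕ) : ℕ :=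
  sInf {m : ℕ | 0 < m ∧ ∀ x : ℝ, (m : ℝ) ≤ x → primePi (x / k) + n ≤ primePi x}

/-- The `n`-th prime (`nthPrime 1 = 2`). -/
noncomputable def nthPrime (n : ℕ) : ℕ := Nat.nth Nat.Prime (n - 1)

open Real Finset Chebyshev
open ArithmeticFunction hiding log
open scoped Nat

lemma log_factorial_eq_sum_log (N : ℕ) : log N ! = ∑ n ∈ Ioc 0 N, log n := by
  induction N with
  | zero => simp
  | succ N ih =>
    rw [sum_Ioc_succ_top N.zero_le, ← ih, Nat.factorial_succ, Nat.cast_mul,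
      log_mul (by positivity) (by positivity), add_comm]

lemma log_factorial_eq_sum_vonMangoldt (N : ℕ) :
    log N ! = ∑ d ∈ Ioc 0 N, Λ d * (N / d : ℕ) := by
  rw [← sum_Ioc_mul_zeta_eq_sum, vonMangoldt_mul_zeta, log_factorial_eq_sum_log]
  simp only [ArithmeticFunction.log_apply]

lemma log_factorial_div_eq_sum_vonMangoldt (N j : ℕ) :
    log (N / j) ! = ∑ d ∈ Ioc 0 N, Λ d * (N / d / j : ℕ) := by
  simp only [log_factorial_eq_sum_vonMangoldt, Nat.div_div_eq_div_mul, mul_comm j]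
  refine sum_subset_zero_on_sdiff (Ioc_subset_Ioc_right (N.div_le_self j)) (fun d hd => ?_)
    (fun _ _ => rfl)
  simp only [mem_sdiff, mem_Ioc, not_and, not_le] at hd
  rw [mul_comm d, ← Nat.div_div_eq_div_mul, Nat.div_eq_of_lt (hd.2 hd.1.1), Nat.cast_zero,
    mul_zero]

noncomputable def logFactorialCombination (x : ℝ) : ℝ :=
  log ⌊x⌋₊ ! - log ⌊x / 2⌋₊ ! - log ⌊x / 3⌋₊ ! - log ⌊x / 5⌋₊ ! + log ⌊x / 30⌋₊ !

noncomputable def chebyshevWeight (m : ℕ) : ℝ :=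
  (m : ℝ) - (m / 2 : ℕ) - (m / 3 : ℕ) - (m / 5 : ℕ) + (m / 30 : ℕ)

lemma chebyshevWeight_le_one (m : ℕ) : chebyshevWeight m ≤ 1 := by
  have key : m + m / 30 ≤ 1 + m / 2 + m / 3 + m / 5 := by omega
  have := (Nat.cast_le (α := ℝ)).2 key
  push_cast at this
  rw [chebyshevWeight]
  linarith

lemma logFactorialCombination_eq_sum (x : ℝ) :
    logFactorialCombination x = ∑ d ∈ Ioc 0 ⌊x⌋₊, Λ d * chebyshevWeight (⌊x⌋₊ / d) := by
  simp only [logFactorialCombination, Nat.floor_div_ofNat, log_factorial_div_eq_sum_vonMangoldt]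
  rw [log_factorial_eq_sum_vonMangoldt]
  simp only [chebyshevWeight, mul_sub, mul_add, sum_sub_distrib, sum_add_distrib]

lemma logFactorialCombination_le_psi (x : ℝ) : logFactorialCombination x ≤ ψ x := by
  rw [logFactorialCombination_eq_sum, psi]
  exact sum_le_sum fun d _ =>
    mul_le_of_le_one_right vonMangoldt_nonneg (chebyshevWeight_le_one _)

lemma sub_mul_log_le_mul_log_sub {a b : ℝ} (ha : 0 < a) (hab : a ≤ b) :
    (b - a) * log a ≤ (b * log b - b) - (a * log a - a) := by
  have hb : 0 < b := ha.trans_le hab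
  have h := log_le_sub_one_of_pos (div_pos ha hb)
  rw [log_div ha.ne' hb.ne'] at h
  have : b * (log a - log b) ≤ a - b := by
    calc b * (log a - log b) ≤ b * (a / b - 1) := mul_le_mul_of_nonneg_left h hb.le
      _ = a - b := by field_simp
  nlinarith

lemma mul_log_sub_le_sub_mul_log {a b : ℝ} (ha : 0 < a) (hab : a ≤ b) :
    (b * log b - b) - (a * log a - a) ≤ (b - a) * log b := by
  have hb : 0 < b := ha.trans_le hab
  have h := log_le_sub_one_of_pos (div_pos hb ha)
  rw [log_div hb.ne' ha.ne'] at h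
  have : a * (log b - log a) ≤ b - a := by
    calc a * (log b - log a) ≤ a * (b / a - 1) := mul_le_mul_of_nonneg_left h ha.le
      _ = b - a := by field_simp
  nlinarith

lemma log_factorial_le (m : ℕ) : log m ! ≤ m * log m - m + log m / 2 + 1 := by
  rcases m with _ | n
  · simp
  have hanti := Stirling.log_stirlingSeq'_antitone (Nat.zero_le n)
  simp only [Function.comp_apply, Nat.succ_eq_add_one, zero_add, Stirling.stirlingSeq_one]
    at hanti
  rw [Stirling.log_stirlingSeq_formula, log_div (exp_pos 1).ne' (by positivity), log_exp,
    log_sqrt (by norm_num), log_mul (by norm_num) (by positivity),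
    log_div (by positivity) (exp_pos 1).ne', log_exp] at hanti
  push_cast at hanti ⊢
  linarith

lemma log_factorial_floor_le {x : ℝ} (hx : 1 ≤ x) :
    log ⌊x⌋₊ ! ≤ x * log x - x + log x / 2 + 1 := by
  have hm : (1 : ℝ) ≤ ⌊x⌋₊ := by exact_mod_cast Nat.one_le_floor_iff x |>.2 hx
  have hmx : (⌊x⌋₊ : ℝ) ≤ x := Nat.floor_le (by linarith)
  have hstirling := log_factorial_le ⌊x⌋₊
  have hmono := sub_mul_log_le_mul_log_sub (by linarith) hmx
  have hgap : 0 ≤ (x - ⌊x⌋₊) * log ⌊x⌋₊ := mul_nonneg (by linarith) (log_nonneg hm)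
  have hlog : log ⌊x⌋₊ ≤ log x := log_le_log (by linarith) hmx
  linarith

lemma le_log_factorial_floor {x : ℝ} (hx : 1 ≤ x) :
    x * log x - x - log x ≤ log ⌊x⌋₊ ! := by
  have hm : (1 : ℝ) ≤ ⌊x⌋₊ := by exact_mod_cast Nat.one_le_floor_iff x |>.2 hx
  have hmx : (⌊x⌋₊ : ℝ) ≤ x := Nat.floor_le (by linarith)
  have hstirling :=
    Stirling.le_log_factorial_stirling (Nat.one_le_iff_ne_zero.1 (Nat.one_le_floor_iff x |>.2 hx))
  have hgap := mul_log_sub_le_sub_mul_log (by linarith) hmx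
  have hgap' : (x - ⌊x⌋₊) * log x ≤ 1 * log x :=
    mul_le_mul_of_nonneg_right (by linarith [Nat.lt_floor_add_one x]) (log_nonneg hx)
  have h2pi : 0 ≤ log (2 * π) := log_nonneg (by linarith [pi_gt_three])
  have hlog : 0 ≤ log ⌊x⌋₊ := log_nonneg hm
  linarith

lemma twentyfive_mul_log_two_le : 25 * log 2 ≤ 9 * log 3 + 5 * log 5 := by
  have h : log ((2 : ℝ) ^ 25) ≤ log ((3 : ℝ) ^ 9 * 5 ^ 5) :=
    log_le_log (by positivity) (by norm_num)
  rwa [log_pow, log_mul (by positivity) (by positivity), log_pow, log_pow] at h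

lemma logFactorialCombination_ge {x : ℝ} (hx : 30 ≤ x) :
    13 / 10 * log 2 * x - 4 * log x - 3 ≤ logFactorialCombination x := by
  have hlog (j : ℝ) (hj : 0 < j) : log (x / j) = log x - log j := log_div (by linarith) hj.ne'
  have h1 := le_log_factorial_floor (x := x) (by linarith)
  have h2 := log_factorial_floor_le (x := x / 2) (by linarith)
  have h3 := log_factorial_floor_le (x := x / 3) (by linarith)
  have h5 := log_factorial_floor_le (x := x / 5) (by linarith)
  have h30 := le_log_factorial_floor (x := x / 30) (by linarith)
  rw [hlog 2 (by norm_num)] at h2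
  rw [hlog 3 (by norm_num)] at h3
  rw [hlog 5 (by norm_num)] at h5
  rw [hlog 30 (by norm_num)] at h30
  have hlog30 : log (30 : ℝ) = log 2 + log 3 + log 5 := by
    rw [show (30 : ℝ) = 2 * 3 * 5 by norm_num, log_mul (by norm_num) (by norm_num),
      log_mul (by norm_num) (by norm_num)]
  have hmain : x * log x - x - (x / 2 * (log x - log 2) - x / 2)
      - (x / 3 * (log x - log 3) - x / 3) - (x / 5 * (log x - log 5) - x / 5)
      + (x / 30 * (log x - log 30) - x / 30)
      = x * (14 * log 2 + 9 * log 3 + 5 * log 5) / 30 := by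
    rw [hlog30]; ring
  have hlam : 13 / 10 * log 2 * x ≤ x * (14 * log 2 + 9 * log 3 + 5 * log 5) / 30 := by
    nlinarith [twentyfive_mul_log_two_le]
  have : 0 ≤ log x := log_nonneg (by linarith)
  have : 0 ≤ log 30 := log_nonneg (by norm_num)
  rw [logFactorialCombination]
  linarith

lemma two_mul_sqrt_mul_log_add_lt {x : ℝ} (hx : 2 ^ 24 ≤ x) :
    2 * √x * log x + 4 * log x + 3 < log 2 / 10 * x := by
  have hx0 : 0 ≤ x := by linarith
  set t := x ^ ((8 : ℕ) : ℝ)⁻¹ with ht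
  have ht0 : 0 ≤ t := rpow_nonneg hx0 _
  have hxt : x = t ^ 8 := (rpow_inv_natCast_pow hx0 (by norm_num)).symm
  have hsqrt : √x = t ^ 4 := by
    rw [hxt, show t ^ 8 = (t ^ 4) ^ 2 by ring, sqrt_sq (by positivity)]
  have hlog : log x ≤ 8 * t := by
    have := log_le_rpow_div hx0 (ε := ((8 : ℕ) : ℝ)⁻¹) (by norm_num)
    rw [← ht] at this
    norm_num at this
    linarith
  have ht8 : 8 ≤ t := by
    have : (8 : ℝ) ^ 8 ≤ t ^ 8 := by rw [← hxt]; norm_num at hx ⊢; linarith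
    exact (pow_le_pow_iff_left₀ (by norm_num) ht0 (by norm_num)).1 this
  have hlog0 : 0 ≤ log x := log_nonneg (by linarith)
  have hlog2 := log_two_gt_d9
  have ht3 : (8 : ℝ) ^ 3 ≤ t ^ 3 := pow_le_pow_left₀ (by norm_num) ht8 3
  have ht5 : 0 ≤ t ^ 5 := by positivity
  have h1 : 2 * √x * log x ≤ 16 * t ^ 5 := by
    rw [hsqrt]; nlinarith [pow_nonneg ht0 4]
  have h2 : 35 * t ^ 5 ≤ log 2 / 10 * x := by
    rw [hxt, show t ^ 8 = t ^ 3 * t ^ 5 by ring]; nlinarith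
  have h3 : 32 * t + 3 < 19 * t ^ 5 := by nlinarith [pow_le_pow_left₀ (by norm_num) ht8 4]
  linarith

lemma psi_ge_of_thirty_le {x : ℝ} (hx : 30 ≤ x) : 13 / 10 * log 2 * x - 4 * log x - 3 ≤ ψ x :=
  (logFactorialCombination_ge hx).trans (logFactorialCombination_le_psi x)

lemma theta_three_mul_div_five_lt {x : ℝ} (hx : 2 ^ 24 ≤ x) : θ (3 * x / 5) < θ x := by
  have hupper := theta_le_log4_mul_x (x := 3 * x / 5) (by linarith)
  have hlog4 : log 4 = 2 * log 2 := by
    rw [show (4 : ℝ) = 2 ^ 2 by norm_num, log_pow, Nat.cast_ofNat]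
  have hpsi := psi_ge_of_thirty_le (x := x) (by linarith)
  have hdiff := psi_sub_theta_le (x := x) (by linarith)
  have hsmall := two_mul_sqrt_mul_log_add_lt hx
  rw [hlog4] at hupper
  linarith

lemma exists_prime_of_theta_lt {x y : ℝ} (h : θ y < θ x) :
    ∃ p : ℕ, p.Prime ∧ y < p ∧ (p : ℝ) ≤ x := by
  by_contra! hp
  refine h.not_ge <| sum_le_sum_of_subset_of_nonneg (fun p hpx => ?_)
    fun p _ _ => log_natCast_nonneg p
  simp only [mem_filter, mem_Ioc] at hpx ⊢
  obtain ⟨⟨hp0, hpx⟩, hprime⟩ := hpx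
  have hx : (p : ℝ) ≤ x := (Nat.le_floor_iff' hp0.ne').1 hpx
  refine ⟨⟨hp0, Nat.le_floor ?_⟩, hprime⟩
  by_contra! hyp
  exact (hp p hprime hyp).not_ge hx

lemma exists_prime_of_isChain {x : ℝ} :
    ∀ {q : ℕ} {l : List ℕ}, (∀ p ∈ q :: l, p.Prime) →
      (q :: l).IsChain (fun a b => 3 * b ≤ 5 * a) → (q : ℝ) ≤ x →
      3 * x < 5 * ((q :: l).getLast (List.cons_ne_nil q l)) →
      ∃ p : ℕ, p.Prime ∧ 3 * x / 5 < p ∧ (p : ℝ) ≤ x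
  | q, [], hprime, _, hqx, hx => ⟨q, hprime q (by simp), by simp at hx; linarith, hqx⟩
  | q, b :: l, hprime, hchain, hqx, hx => by
    rw [List.isChain_cons_cons] at hchain
    by_cases hbx : (b : ℝ) ≤ x
    · exact exists_prime_of_isChain (fun p hp => hprime p (List.mem_cons_of_mem q hp))
        hchain.2 hbx (by simpa using hx)
    · have : ((3 * b : ℕ) : ℝ) ≤ ((5 * q : ℕ) : ℝ) := by exact_mod_cast hchain.1
      push_cast at this
      exact ⟨q, hprime q (by simp), by linarith, hqx⟩

lemma exists_prime_three_mul_div_five_lt {x : ℝ} (hx : 2 ≤ x) :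
    ∃ p : ℕ, p.Prime ∧ 3 * x / 5 < p ∧ (p : ℝ) ≤ x := by
  rcases le_or_gt (2 ^ 24) x with hlarge | hsmall
  · exact exists_prime_of_theta_lt (theta_three_mul_div_five_lt hlarge)
  · refine exists_prime_of_isChain (q := 2) (l := [3, 5, 7, 11, 17, 23, 37, 61, 101, 167, 277,
      461, 761, 1259, 2089, 3469, 5779, 9631, 16033, 26717, 44519, 74197, 123661, 206083, 343433,
      572387, 953977, 1589941, 2649893, 4416473, 7360763, 12267923]) ?_ (by decide)
      (by exact_mod_cast hx) (by norm_num; linarith)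
    simp only [List.mem_cons, List.not_mem_nil, or_false, forall_eq_or_imp, forall_eq]
    norm_num

lemma primePi_lt_primePi_of_prime {x y : ℝ} {p : ℕ} (hp : p.Prime) (hy : y < p)
    (hx : (p : ℝ) ≤ x) : primePi y < primePi x := by
  have hyp : ⌊y⌋₊ < p := (Nat.floor_lt' hp.ne_zero).2 hy
  have hpx : p ≤ ⌊x⌋₊ := Nat.le_floor hx
  simp only [primePi, Nat.primeCounting, Nat.primeCounting']
  calc Nat.count Nat.Prime (⌊y⌋₊ + 1) ≤ Nat.count Nat.Prime p := Nat.count_monotone _ hyp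
    _ < Nat.count Nat.Prime (p + 1) := Nat.count_strict_mono hp (lt_add_one p)
    _ ≤ Nat.count Nat.Prime (⌊x⌋₊ + 1) := Nat.count_monotone _ (by omega)

lemma primePi_natCast (m : ℕ) : primePi m = Nat.primeCounting m := by
  rw [primePi, Nat.floor_natCast]

lemma Ram_one_eq_two {k : ℝ} (hk : 5 / 3 ≤ k) : Ram k 1 = 2 := by
  have hmem : 2 ∈ {m : ℕ | 0 < m ∧ ∀ x : ℝ, (m : ℝ) ≤ x → primePi (x / k) + 1 ≤ primePi x} := by
    refine ⟨two_pos, fun x hx => ?_⟩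
    obtain ⟨p, hp, hxp, hpx⟩ := exists_prime_three_mul_div_five_lt (by exact_mod_cast hx)
    have hxk : x / k ≤ 3 * x / 5 := by
      rw [div_le_div_iff₀ (by linarith) (by norm_num)]
      nlinarith
    exact primePi_lt_primePi_of_prime hp (hxk.trans_lt hxp) hpx
  refine le_antisymm (Nat.sInf_le hmem) (le_csInf ⟨2, hmem⟩ fun m ⟨hm, hall⟩ => ?_)
  by_contra! hm1
  obtain rfl : m = 1 := by omega
  have := hall 1 (by norm_num)
  rw [show (1 : ℝ) = (1 : ℕ) by norm_num, primePi_natCast, Nat.primeCounting_one] at this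
  omega

lemma primePi_div_add_le_of_Ram_le {k x : ℝ} {n : ℕ} (h : Ram k n ≠ 0)
    (hx : (Ram k n : ℝ) ≤ x) : primePi (x / k) + n ≤ primePi x :=
  (Nat.sInf_mem (Nat.nonempty_of_pos_sInf (Nat.pos_of_ne_zero h))).2 x hx

lemma Ram_ne_nthPrime {k : ℝ} (hk0 : 0 < k) (hk : k < 2) {n : ℕ} (hn : 2 ≤ n) :
    Ram k n ≠ nthPrime n := by
  intro h
  set q := Nat.nth Nat.Prime n
  have hq5 : 5 ≤ q :=
    Nat.nth_prime_two_eq_five ▸ Nat.nth_monotone Nat.infinite_setOfPred_prime hn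
  have hRam : Ram k n < q := h ▸ Nat.nth_strictMono Nat.infinite_setOfPred_prime (by omega)
  have hx := primePi_div_add_le_of_Ram_le (x := (q - 1 : ℕ))
    (by rw [h]; exact (Nat.prime_nth_prime _).ne_zero) (by exact_mod_cast Nat.le_sub_one_of_lt hRam)
  have hpi : primePi (q - 1 : ℕ) = n := by
    rw [primePi_natCast, Nat.primeCounting, Nat.sub_add_cancel (by omega),
      Nat.primeCounting'_nth_eq]
  have hpos : primePi 0 < primePi (((q - 1 : ℕ) : ℝ) / k) := by
    refine primePi_lt_primePi_of_prime Nat.prime_two (by norm_num) ?_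
    rw [le_div_iff₀ hk0]
    have : (4 : ℝ) ≤ (q - 1 : ℕ) := by exact_mod_cast (by omega : 4 ≤ q - 1)
    push_cast at this ⊢
    nlinarith
  omega

theorem stmt9 (k : ℝ) (hk1 : 5 / 3 ≤ k) (hk2 : k < 2) (n : ℕ) (hn : 1 ≤ n) :
    Ram k n = nthPrime n ↔ n = 1 := by
  constructor
  · intro h
    by_contra hn1
    exact Ram_ne_nthPrime (by linarith) hk2 (by omega) h
  · rintro rfl
    rw [Ram_one_eq_two hk1, nthPrime, Nat.sub_self, Nat.nth_prime_zero_eq_two]
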